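/- Suppose F is a pointwise equicontinuous family of continuous selfmaps of a compact metric space (X,d). Then for every ε>0 there is a metric d_ε topologically equivalent to d such that every f∈F is (1+ε)-Lipschitz with respect to d_ε. -/

import Mathlib

/-!
On a compact space pointwise equicontinuity is uniform, and uniform equicontinuity passes to
every power `F^n`. Take `ρ(x, y) = d(x, y) + Σ_{n ≥ 1} sup_{g ∈ F^n} d(g x, g y) / (1 + ε)^n`.
Precomposing with `f ∈ F` sends `F^n` into `F^(n+1)`, so the series for `ρ(f x, f y)` is
dominated by the series for `ρ(x, y)` shifted by one index, i.e. by `(1 + ε) ρ(x, y)`.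
Since `d ≤ ρ` and, by dominated convergence and the equicontinuity of each `F^n`, `ρ → 0`
uniformly as `d → 0`, the metric `ρ` induces the topology of `d`.
-/

open Metric Filter Topology

variable {X : Type*}

/-- A family `F` of selfmaps is uniformly equicontinuous. -/
def UnifEquicont [MetricSpace X] (F : Set (X → X)) : Prop :=
  ∀ ε : ℝ, 0 < ε → ∃ δ : ℝ, 0 < δ ∧ ∀ x y : X, dist x y < δ → ∀ f ∈ F, dist (f x) (f y) < ε

/-- A family `F` of selfmaps is pointwise equicontinuous. -/
def PtEquicont [MetricSpace X] (F : Set (X → X)) : Prop :=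
  ∀ x : X, ∀ ε : ℝ, 0 < ε →
    ∃ δ : ℝ, 0 < δ ∧ ∀ y : X, dist x y < δ → ∀ f ∈ F, dist (f x) (f y) < ε

/-- `famPow F n` is the family `F^n` of `n`-fold compositions of members of `F`. -/
def famPow (F : Set (X → X)) : ℕ → Set (X → X)
  | 0 => {id}
  | n + 1 => {h | ∃ f ∈ F, ∃ g ∈ famPow F n, h = f ∘ g}

/-- The metric `ρ(x,y) = d(x,y) + Σₙ sup{d(f x, f y) : f ∈ F^n}/(1+ε)^n`. -/
noncomputable def rho [MetricSpace X] (F : Set (X → X)) (ε : ℝ) (x y : X) : ℝ :=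
  dist x y + ∑' n : ℕ, (⨆ f ∈ famPow F (n + 1), dist (f x) (f y)) / (1 + ε) ^ (n + 1)

/-- `ρ` is a metric on `X`. -/
def IsMetric (ρ : X → X → ℝ) : Prop :=
  (∀ x, ρ x x = 0) ∧ (∀ x y, ρ x y = 0 → x = y) ∧ (∀ x y, ρ x y = ρ y x) ∧
    (∀ x y z, ρ x z ≤ ρ x y + ρ y z)

open Bornology
open scoped Uniformity

section famPow

variable {F : Set (X → X)}

lemma mem_famPow_one {f : X → X} (hf : f ∈ F) : f ∈ famPow F 1 :=
  ⟨f, hf, id, rfl, rfl⟩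

lemma comp_mem_famPow_succ {f : X → X} (hf : f ∈ F) :
    ∀ {n : ℕ} {g : X → X}, g ∈ famPow F n → g ∘ f ∈ famPow F (n + 1)
  | 0, g, hg => by rw [show g = id from hg]; exact mem_famPow_one hf
  | _ + 1, _, ⟨f', hf', g', hg', rfl⟩ => ⟨f', hf', g' ∘ f, comp_mem_famPow_succ hf hg', rfl⟩

end famPow

section supDist

variable {Y : Type*} [PseudoMetricSpace Y]

noncomputable def supDist (G : Set (X → Y)) (x y : X) : ℝ :=
  ⨆ f ∈ G, dist (f x) (f y)

variable {G H : Set (X → Y)} {x y z : X}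

lemma supDist_nonneg : 0 ≤ supDist G x y :=
  Real.iSup_nonneg fun _ => Real.iSup_nonneg fun _ => dist_nonneg

lemma supDist_le {c : ℝ} (hc : 0 ≤ c) (h : ∀ f ∈ G, dist (f x) (f y) ≤ c) :
    supDist G x y ≤ c :=
  Real.iSup_le (fun f => Real.iSup_le (h f) hc) hc

lemma supDist_self : supDist G x x = 0 :=
  le_antisymm (supDist_le le_rfl fun f _ => (dist_self (f x)).le) supDist_nonneg

lemma supDist_comm : supDist G x y = supDist G y x := by
  simp only [supDist, dist_comm]

variable [BoundedSpace Y]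

lemma dist_le_diam_univ (a b : Y) : dist a b ≤ diam (Set.univ : Set Y) :=
  dist_le_diam_of_mem (IsBounded.all _) trivial trivial

lemma supDist_le_diam : supDist G x y ≤ diam (Set.univ : Set Y) :=
  supDist_le diam_nonneg fun _ _ => dist_le_diam_univ _ _

lemma dist_le_supDist {f : X → Y} (hf : f ∈ G) : dist (f x) (f y) ≤ supDist G x y := by
  have hbdd : BddAbove (Set.range fun g : X → Y => ⨆ _ : g ∈ G, dist (g x) (g y)) := by
    refine ⟨diam (Set.univ : Set Y), ?_⟩
    rintro _ ⟨g, rfl⟩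
    exact Real.iSup_le (fun _ => dist_le_diam_univ _ _) diam_nonneg
  exact (ciSup_pos (f := fun _ => dist (f x) (f y)) hf).symm.trans_le (le_ciSup hbdd f)

lemma supDist_triangle : supDist G x z ≤ supDist G x y + supDist G y z :=
  supDist_le (add_nonneg supDist_nonneg supDist_nonneg) fun _ hf =>
    (dist_triangle _ _ _).trans (add_le_add (dist_le_supDist hf) (dist_le_supDist hf))

lemma supDist_apply_le {f : X → X} (h : ∀ g ∈ G, g ∘ f ∈ H) :
    supDist G (f x) (f y) ≤ supDist H x y :=
  supDist_le supDist_nonneg fun g hg => dist_le_supDist (h g hg)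

end supDist

section equicontinuity

variable [MetricSpace X] {F : Set (X → X)}

lemma PtEquicont.unifEquicont [CompactSpace X] (hF : PtEquicont F) : UnifEquicont F := by
  have hequi : Equicontinuous (fun f : F => (f : X → X)) := by
    intro x
    rw [Metric.equicontinuousAt_iff]
    intro η hη
    obtain ⟨δ, hδ, h⟩ := hF x η hη
    exact ⟨δ, hδ, fun y hy f => h y (by rwa [dist_comm] at hy) f f.2⟩
  have huequi := Metric.uniformEquicontinuous_iff.1
    (CompactSpace.uniformEquicontinuous_of_equicontinuous hequi)
  intro η hη
  obtain ⟨δ, hδ, h⟩ := huequi η hη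
  exact ⟨δ, hδ, fun x y hxy f hf => h x y hxy ⟨f, hf⟩⟩

lemma unifEquicont_famPow (hF : UnifEquicont F) : ∀ n, UnifEquicont (famPow F n)
  | 0 => fun η hη => ⟨η, hη, fun x y hxy f hf => by rwa [show f = id from hf]⟩
  | n + 1 => fun η hη => by
    obtain ⟨δ₁, hδ₁, h₁⟩ := hF η hη
    obtain ⟨δ, hδ, h⟩ := unifEquicont_famPow hF n δ₁ hδ₁
    refine ⟨δ, hδ, ?_⟩
    rintro x y hxy _ ⟨f, hf, g, hg, rfl⟩
    exact h₁ (g x) (g y) (h x y hxy g hg) f hf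

lemma UnifEquicont.tendsto_supDist (hF : UnifEquicont F) :
    Tendsto (fun p : X × X => supDist F p.1 p.2) (𝓤 X) (𝓝 0) := by
  refine (uniformity_basis_dist.tendsto_iff nhds_basis_ball).2 fun η hη => ?_
  obtain ⟨δ, hδ, h⟩ := hF (η / 2) (half_pos hη)
  refine ⟨δ, hδ, fun p hp => ?_⟩
  have hle : supDist F p.1 p.2 ≤ η / 2 :=
    supDist_le (half_pos hη).le fun f hf => (h _ _ hp f hf).le
  rw [mem_ball, Real.dist_0_eq_abs, abs_of_nonneg supDist_nonneg]
  linarith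

end equicontinuity

lemma summable_div_pow_succ {u : ℕ → ℝ} {a C : ℝ} (ha : 1 < a) (hu0 : ∀ n, 0 ≤ u n)
    (huC : ∀ n, u n ≤ C) : Summable fun n => u n / a ^ (n + 1) := by
  have ha0 : 0 < a := one_pos.trans ha
  have hgeom := (summable_geometric_of_lt_one (inv_nonneg.2 ha0.le)
    (inv_lt_one_of_one_lt₀ ha)).mul_left C
  refine hgeom.of_nonneg_of_le (fun n => div_nonneg (hu0 n) (by positivity)) fun n => ?_
  calc u n / a ^ (n + 1) ≤ C / a ^ n :=
        div_le_div₀ ((hu0 n).trans (huC n)) (huC n) (by positivity)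
          (pow_le_pow_right₀ ha.le n.le_succ)
    _ = C * a⁻¹ ^ n := by rw [div_eq_mul_inv, inv_pow]

section rho

variable [MetricSpace X] {F : Set (X → X)} {ε : ℝ}

lemma rho_eq (x y : X) :
    rho F ε x y = dist x y + ∑' n, supDist (famPow F (n + 1)) x y / (1 + ε) ^ (n + 1) :=
  rfl

lemma dist_le_rho (hε : 0 < ε) (x y : X) : dist x y ≤ rho F ε x y :=
  le_add_of_nonneg_right <| tsum_nonneg fun _ => div_nonneg supDist_nonneg (by positivity)

variable [BoundedSpace X]

lemma summable_supDist_div_pow (hε : 0 < ε) (G : ℕ → Set (X → X)) (x y : X) :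
    Summable fun n => supDist (G n) x y / (1 + ε) ^ (n + 1) :=
  summable_div_pow_succ (lt_add_of_pos_right 1 hε) (fun _ => supDist_nonneg)
    fun _ => supDist_le_diam

lemma isMetric_rho (hε : 0 < ε) : IsMetric (rho F ε) := by
  refine ⟨fun x => by simp [rho_eq, supDist_self], fun x y h => ?_, fun x y => ?_,
    fun x y z => ?_⟩
  · exact dist_le_zero.1 ((dist_le_rho hε x y).trans h.le)
  · simp only [rho_eq, dist_comm x y, supDist_comm (x := x)]
  · have hsum := summable_supDist_div_pow hε (fun n => famPow F (n + 1))
    have hterm (n : ℕ) : supDist (famPow F (n + 1)) x z / (1 + ε) ^ (n + 1) ≤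
        supDist (famPow F (n + 1)) x y / (1 + ε) ^ (n + 1) +
          supDist (famPow F (n + 1)) y z / (1 + ε) ^ (n + 1) := by
      rw [← add_div]
      gcongr
      exact supDist_triangle
    have htsum := (hsum x z).tsum_le_tsum hterm ((hsum x y).add (hsum y z))
    rw [(hsum x y).tsum_add (hsum y z)] at htsum
    simp only [rho_eq]
    linarith [dist_triangle x y z]

lemma tendsto_rho_uniformity (hF : UnifEquicont F) (hε : 0 < ε) :
    Tendsto (fun p : X × X => rho F ε p.1 p.2) (𝓤 X) (𝓝 0) := by
  have hdist : Tendsto (fun p : X × X => dist p.1 p.2) (𝓤 X) (𝓝 0) := by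
    rw [Metric.uniformity_eq_comap_nhds_zero]
    exact tendsto_comap
  have hterm (n : ℕ) : Tendsto (fun p : X × X => supDist (famPow F (n + 1)) p.1 p.2 /
      (1 + ε) ^ (n + 1)) (𝓤 X) (𝓝 0) := by
    simpa using (unifEquicont_famPow hF (n + 1)).tendsto_supDist.div_const _
  have htail := tendsto_tsum_of_dominated_convergence
    (summable_div_pow_succ (C := diam (Set.univ : Set X)) (lt_add_of_pos_right 1 hε)
      (fun _ => diam_nonneg) fun _ => le_rfl)
    hterm (Eventually.of_forall fun p n => ?_)
  · simpa [rho_eq] using hdist.add htail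
  · rw [Real.norm_of_nonneg (div_nonneg supDist_nonneg (by positivity))]
    gcongr
    exact supDist_le_diam

lemma rho_apply_le (hε : 0 < ε) {f : X → X} (hf : f ∈ F) (x y : X) :
    rho F ε (f x) (f y) ≤ (1 + ε) * rho F ε x y := by
  set a : ℕ → ℝ := fun n => supDist (famPow F (n + 1)) x y / (1 + ε) ^ (n + 1)
  have ha : Summable a := summable_supDist_div_pow hε _ x y
  have hshift : Summable fun n => supDist (famPow F (n + 2)) x y / (1 + ε) ^ (n + 1) :=
    summable_supDist_div_pow hε _ x y
  calc rho F ε (f x) (f y)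
      ≤ supDist (famPow F 1) x y +
          ∑' n, supDist (famPow F (n + 2)) x y / (1 + ε) ^ (n + 1) := by
        refine add_le_add (dist_le_supDist (mem_famPow_one hf))
          ((summable_supDist_div_pow hε _ _ _).tsum_le_tsum (fun n => ?_) hshift)
        gcongr
        exact supDist_apply_le fun g hg => comp_mem_famPow_succ hf hg
    _ = (1 + ε) * ∑' n, a n := by
        rw [← tsum_mul_left, (ha.mul_left (1 + ε)).tsum_eq_zero_add]
        simp only [a]
        congr 1
        · rw [zero_add, pow_one]
          field_simp
        · refine tsum_congr fun n => ?_
          field_simp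
          ring
    _ ≤ (1 + ε) * rho F ε x y := by
        gcongr
        exact le_add_of_nonneg_left dist_nonneg

end rho

lemma IsMetric.exists_metricSpace [MetricSpace X] {ρ : X → X → ℝ} (hρ : IsMetric ρ)
    (hle : ∀ x y, dist x y ≤ ρ x y)
    (hlim : Tendsto (fun p : X × X => ρ p.1 p.2) (𝓤 X) (𝓝 0)) :
    ∃ m : MetricSpace X,
      m.toUniformSpace.toTopologicalSpace = (inferInstance : TopologicalSpace X) ∧
        ∀ x y, m.dist x y = ρ x y := by
  obtain ⟨hself, hzero, hcomm, htri⟩ := hρ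
  have hopen (s : Set X) : IsOpen s ↔ ∀ x ∈ s, ∃ η > 0, ∀ y, ρ x y < η → y ∈ s := by
    rw [Metric.isOpen_iff]
    refine forall₂_congr fun x _ => ⟨fun ⟨δ, hδ, hball⟩ => ⟨δ, hδ, fun y hy => hball ?_⟩,
      fun ⟨η, hη, hρs⟩ => ?_⟩
    · rw [mem_ball, dist_comm]
      exact (hle x y).trans_lt hy
    · obtain ⟨δ, hδ, hsmall⟩ :=
        Metric.mem_uniformity_dist.1 (hlim.eventually (gt_mem_nhds hη))
      exact ⟨δ, hδ, fun y hy => hρs y (hsmall (by rwa [mem_ball, dist_comm] at hy))⟩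
  exact ⟨MetricSpace.ofDistTopology ρ hself hcomm htri hopen hzero, rfl, fun _ _ => rfl⟩

theorem compact_exists_equiv_metric_lipschitz_general [MetricSpace X] [CompactSpace X]
    (F : Set (X → X)) (ε : ℝ)
    (hF : PtEquicont F) (hε : 0 < ε) :
    ∃ m' : MetricSpace X,
      m'.toUniformSpace.toTopologicalSpace = (inferInstance : TopologicalSpace X) ∧
        ∀ f ∈ F, ∀ x y : X, m'.dist (f x) (f y) ≤ (1 + ε) * m'.dist x y := by
  -- Proved before `m` enters the context, where it would become a local instance and be used
  -- in place of the given metric.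
  have hlip : ∀ f ∈ F, ∀ x y, rho F ε (f x) (f y) ≤ (1 + ε) * rho F ε x y :=
    fun _ hf => rho_apply_le hε hf
  obtain ⟨m, hm, hdist⟩ := (isMetric_rho hε).exists_metricSpace (dist_le_rho hε)
    (tendsto_rho_uniformity hF.unifEquicont hε)
  exact ⟨m, hm, fun f hf x y => by simpa only [hdist] using hlip f hf x y⟩

theorem compact_exists_equiv_metric_lipschitz [MetricSpace X] [CompactSpace X]
    (F : Set (X → X)) (ε : ℝ)
    (hFc : ∀ f ∈ F, Continuous f) (hF : PtEquicont F) (hε : 0 < ε) :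
    ∃ m' : MetricSpace X,
      m'.toUniformSpace.toTopologicalSpace = (inferInstance : TopologicalSpace X) ∧
        ∀ f ∈ F, ∀ x y : X, m'.dist (f x) (f y) ≤ (1 + ε) * m'.dist x y :=
  compact_exists_equiv_metric_lipschitz_general F ε hF hε
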